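/- Let n ≥ 1 and q ∈ ℂ with q ≠ 0 and q^j ≠ 1 for all 1 ≤ j ≤ n-1. Then T_{q^{-1}} = I + Σ_{j=1}^{n-1} ((-1)^j q^{j(j-1)/2}/(q;q)_j) (qS)^j, where T_{q^{-1}} is the n×n lower-triangular Toeplitz matrix with entries 1/(q^{-1};q^{-1})_{i-j} for i ≥ j, and S is the lower shift matrix. -/
import Mathlib

noncomputable def qPoch (z q : ℂ) (n : ℕ) : ℂ := ∏ i ∈ Finset.range n, (1 - z * q ^ i)

lemma qPoch_succ (z q : ℂ) (d : ℕ) : qPoch z q (d+1) = qPoch z q d * (1 - z * q ^ d) :=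
  Finset.prod_range_succ _ _

lemma tri_succ (d : ℕ) : (d+1)*(d+2)/2 = d*(d+1)/2 + (d+1) := by
  have h : (d+1)*(d+2) = d*(d+1) + (d+1)*2 := by ring
  rw [h, Nat.add_mul_div_right _ _ (by norm_num : 0 < 2)]

lemma qPoch_inv_key (q : ℂ) (hq0 : q ≠ 0) (d : ℕ) :
    qPoch q⁻¹ q⁻¹ d * q ^ (d*(d+1)/2) = (-1)^d * qPoch q q d := by
  induction d with
  | zero => simp [qPoch]
  | succ d ih =>
    have htri : (d+1)*(d+1+1)/2 = d*(d+1)/2 + (d+1) := tri_succ d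
    rw [qPoch_succ, qPoch_succ, htri, pow_add]
    have hp : (q:ℂ) ^ (d+1) ≠ 0 := pow_ne_zero _ hq0
    have hfac : (1 - q⁻¹ * (q⁻¹) ^ d) * q ^ (d+1) = -(1 - q * q ^ d) := by
      have h1 : q⁻¹ * (q⁻¹) ^ d = (q ^ (d+1))⁻¹ := by
        rw [← pow_succ', inv_pow]
      rw [h1, sub_mul, one_mul, inv_mul_cancel₀ hp, pow_succ]
      ring
    calc qPoch q⁻¹ q⁻¹ d * (1 - q⁻¹ * (q⁻¹)^d) * (q ^ (d*(d+1)/2) * q ^ (d+1))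
        = (qPoch q⁻¹ q⁻¹ d * q ^ (d*(d+1)/2)) * ((1 - q⁻¹ * (q⁻¹)^d) * q ^ (d+1)) := by ring
      _ = ((-1)^d * qPoch q q d) * (-(1 - q * q ^ d)) := by rw [ih, hfac]
      _ = (-1)^(d+1) * (qPoch q q d * (1 - q * q ^ d)) := by ring

lemma tri_shift (d : ℕ) (hd : 1 ≤ d) : d * (d - 1) / 2 + d = d * (d + 1) / 2 := by
  obtain ⟨e, rfl⟩ := Nat.exists_eq_add_of_le hd
  have h1 : (1 + e) * (1 + e - 1) = e * (e + 1) := by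
    simp [Nat.add_comm 1 e]; ring
  have h2 : (1 + e) * (1 + e + 1) = e * (e + 1) + (e + 1) * 2 := by ring
  rw [h1, h2, Nat.add_mul_div_right _ _ (by norm_num : 0 < 2)]
  omega

lemma qPoch_ne_zero (n : ℕ) (q : ℂ)
    (hq : ∀ j : ℕ, 1 ≤ j → j ≤ n - 1 → q ^ j ≠ 1) (d : ℕ) (hd : d ≤ n - 1) :
    qPoch q q d ≠ 0 := by
  unfold qPoch
  rw [Finset.prod_ne_zero_iff]
  intro i hi
  rw [Finset.mem_range] at hi
  have := hq (i+1) (Nat.succ_le_succ (Nat.zero_le _)) (by omega)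
  rw [← pow_succ'] at *
  intro h
  exact this (by linear_combination -h)

theorem stmt12 (n : ℕ) (hn : 1 ≤ n) (q : ℂ) (hq0 : q ≠ 0)
    (hq : ∀ j : ℕ, 1 ≤ j → j ≤ n - 1 → q ^ j ≠ 1)
    (T' S : Matrix (Fin n) (Fin n) ℂ)
    (hT' : ∀ i j : Fin n, T' i j =
      if (j : ℕ) ≤ (i : ℕ) then 1 / qPoch q⁻¹ q⁻¹ ((i : ℕ) - (j : ℕ)) else 0)
    (hS : ∀ i j : Fin n, S i j = if (i : ℕ) = (j : ℕ) + 1 then 1 else 0) :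
    T' = 1 + ∑ j ∈ Finset.Icc 1 (n - 1),
      ((-1) ^ j * q ^ (j * (j - 1) / 2) / qPoch q q j) • (q • S) ^ j := by
  have key : ∀ m : ℕ, ∀ i k : Fin n,
      (S ^ m) i k = if (i : ℕ) = (k : ℕ) + m then 1 else 0 := by
    intro m
    induction m with
    | zero =>
      intro i k
      simp [Matrix.one_apply, Fin.ext_iff, eq_comm]
    | succ m ih =>
      intro i k
      rw [pow_succ, Matrix.mul_apply]
      simp only [ih, hS]
      rcases lt_or_ge ((k : ℕ) + 1) n with hk | hk
      · rw [Finset.sum_eq_single (⟨(k : ℕ) + 1, hk⟩ : Fin n)]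
        · have h1 : ((⟨(k : ℕ) + 1, hk⟩ : Fin n) : ℕ) = (k : ℕ) + 1 := rfl
          have h2 : (k : ℕ) + 1 + m = (k : ℕ) + (m + 1) := by omega
          simp [h1, h2]
        · intro b _ hb
          have : (b : ℕ) ≠ (k : ℕ) + 1 := fun h => hb (Fin.ext h)
          simp [this]
        · intro h; exact absurd (Finset.mem_univ _) h
      · have h1 : ∀ l : Fin n, (l : ℕ) ≠ (k : ℕ) + 1 :=
          fun l h => absurd (h ▸ l.isLt) (not_lt.mpr hk)
        have h2 : (i : ℕ) ≠ (k : ℕ) + (m + 1) := by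
          have := i.isLt; omega
        simp [h1, h2]
  ext i k
  rw [hT']
  simp only [Matrix.add_apply, Matrix.sum_apply, Matrix.one_apply, smul_pow,
    Matrix.smul_apply, key, smul_eq_mul, mul_ite, mul_one, mul_zero]
  rcases lt_trichotomy ((k : ℕ)) ((i : ℕ)) with hlt | heq | hgt
  · -- i > k : strictly below diagonal
    set d := (i : ℕ) - (k : ℕ) with hd
    have hd1 : 1 ≤ d := by omega
    have hdn : d ≤ n - 1 := by have := i.isLt; omega
    have hik : (k : ℕ) ≤ (i : ℕ) := le_of_lt hlt
    rw [if_pos hik]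
    have hne : i ≠ k := fun h => by rw [h] at hlt; exact lt_irrefl _ hlt
    rw [if_neg hne, zero_add]
    rw [Finset.sum_eq_single d]
    · rw [if_pos (by omega : (i : ℕ) = (k : ℕ) + d)]
      -- algebra
      have hP : qPoch q q d ≠ 0 := qPoch_ne_zero n q hq d hdn
      have hkey := qPoch_inv_key q hq0 d
      have hQinv : qPoch q⁻¹ q⁻¹ d ≠ 0 := by
        intro h
        rw [h, zero_mul] at hkey
        exact hP (by
          have := hkey.symm
          rcases mul_eq_zero.mp this with h' | h'
          · exact absurd h' (pow_ne_zero _ (by norm_num))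
          · exact h')
      have hexp : d * (d - 1) / 2 + d = d * (d + 1) / 2 := tri_shift d hd1
      rw [div_mul_eq_mul_div, div_eq_div_iff hQinv hP, one_mul]
      calc qPoch q q d = (-1) ^ d * ((-1) ^ d * qPoch q q d) := by
            rw [← mul_assoc, ← pow_add, ← two_mul, pow_mul]; simp
        _ = (-1) ^ d * (qPoch q⁻¹ q⁻¹ d * q ^ (d * (d + 1) / 2)) := by rw [hkey]
        _ = (-1) ^ d * q ^ (d * (d - 1) / 2) * q ^ d * qPoch q⁻¹ q⁻¹ d := by
            rw [← hexp, pow_add]; ring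
    · intro b hb hbd
      rw [if_neg (by
        rw [Finset.mem_Icc] at hb
        omega)]
    · intro h
      rw [Finset.mem_Icc] at h
      omega
  · -- i = k
    have hik : (k : ℕ) ≤ (i : ℕ) := le_of_eq heq
    rw [if_pos hik]
    have : (i : ℕ) - (k : ℕ) = 0 := by omega
    rw [this]
    have hik2 : i = k := (Fin.ext heq).symm
    rw [if_pos hik2]
    rw [Finset.sum_eq_zero]
    · simp [qPoch]
    · intro b hb
      rw [Finset.mem_Icc] at hb
      rw [if_neg (by omega)]
  · -- k > i
    rw [if_neg (by omega)]
    have hne : i ≠ k := fun h => by rw [h] at hgt; exact lt_irrefl _ hgt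
    rw [if_neg hne, zero_add]
    rw [Finset.sum_eq_zero]
    intro b hb
    rw [Finset.mem_Icc] at hb
    rw [if_neg (by omega)]
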